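/- arXiv:1805.09535 — 2 statements merged into one kernel-verified Lean document; each statement's English description precedes it below -/
import Mathlib

section
/- If the one-variable equation (u0 X u1 ⋯ X un, v0 X v1 ⋯ X vn) has a nonempty solution, un = u·a^m for some word u, letter a, and m ≥ 0, and u0⋯u_{n−1}u is a prefix of v0⋯vn, then the empty word is also a solution of the equation. -/
/-!
Both sides of a solution contain `x` equally often, so erasing those occurrences leaves two
words that are permutations of each other (abelian equivalence). After cancelling the common
prefix `u₀⋯uₙ₋₁u`, the suffix of `v₀⋯vₙ` is a permutation of `aᵐ`, hence equal to it.
-/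

/-- `assemble x [u₀, u₁, …, uₙ]` is the word `u₀ x u₁ x ⋯ x uₙ`. -/
def assemble {Γ : Type*} (x : List Γ) (cs : List (List Γ)) : List Γ :=
  (cs.intersperse x).flatten

open List

theorem List.flatten_eq_dropLast_flatten_append {α : Type*} {L : List (List α)} {l : List α}
    (h : L.getLast? = some l) : L.flatten = L.dropLast.flatten ++ l :=
  (congrArg flatten (dropLast_append_getLast? l h)).symm.trans flatten_concat

theorem List.eq_append_replicate_of_prefix_of_perm {α : Type*} {p w : List α} {a : α} {m : ℕ}
    (hpre : p <+: w) (hperm : w ~ p ++ replicate m a) : w = p ++ replicate m a := by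
  obtain ⟨r, rfl⟩ := hpre
  rw [perm_replicate.1 ((perm_append_left_iff p).1 hperm)]

section assemble

variable {Γ : Type*}

theorem assemble_nil : ∀ cs : List (List Γ), assemble [] cs = cs.flatten
  | [] | [_] => rfl
  | c :: d :: cs => by
    simp [assemble, intersperse_cons_cons, ← assemble_nil (d :: cs)]

theorem assemble_perm (x : List Γ) :
    ∀ cs : List (List Γ), assemble x cs ~ cs.flatten ++ (replicate (cs.length - 1) x).flatten
  | [] | [_] => by simp [assemble]
  | c :: d :: cs => by
    have ih := (assemble_perm x (d :: cs)).append_left x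
    have hrest := (ih.trans (perm_append_comm_assoc _ _ _)).append_left c
    simpa [assemble, intersperse_cons_cons, replicate_succ] using hrest

theorem flatten_perm_of_assemble_eq {x : List Γ} {us vs : List (List Γ)}
    (hlen : us.length = vs.length) (h : assemble x us = assemble x vs) :
    us.flatten ~ vs.flatten := by
  have := (assemble_perm x us).symm.trans (h ▸ assemble_perm x vs)
  rwa [hlen, perm_append_right_iff] at this

end assemble

theorem empty_solution_general {Γ : Type*}
    (us vs : List (List Γ)) (hlen : us.length = vs.length)
    (x : List Γ) (hsol : assemble x us = assemble x vs)
    (u : List Γ) (a : Γ) (m : ℕ)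
    (hun : us.getLast? = some (u ++ List.replicate m a))
    (hpre : us.dropLast.flatten ++ u <+: vs.flatten) :
    assemble ([] : List Γ) us = assemble ([] : List Γ) vs := by
  have hus : us.flatten = us.dropLast.flatten ++ u ++ replicate m a := by
    rw [flatten_eq_dropLast_flatten_append hun, append_assoc]
  have hperm : vs.flatten ~ us.dropLast.flatten ++ u ++ replicate m a :=
    hus ▸ (flatten_perm_of_assemble_eq hlen hsol).symm
  rw [assemble_nil, assemble_nil, hus, eq_append_replicate_of_prefix_of_perm hpre hperm]

/-- if `u₀ X u₁ ⋯ X uₙ = v₀ X v₁ ⋯ X vₙ` (n ≥ 1) has a nonempty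
solution, uₙ = u·aᵐ for a word u, a letter a and m ≥ 0, and u₀⋯u_{n−1}u is a
prefix of v₀⋯vₙ, then the empty word is also a solution. -/
theorem empty_solution {Γ : Type*}
    (us vs : List (List Γ)) (hlen : us.length = vs.length) (hn : 2 ≤ us.length)
    (x : List Γ) (hx : x ≠ []) (hsol : assemble x us = assemble x vs)
    (u : List Γ) (a : Γ) (m : ℕ)
    (hun : us.getLast? = some (u ++ List.replicate m a))
    (hpre : us.dropLast.flatten ++ u <+: vs.flatten) :
    assemble ([] : List Γ) us = assemble ([] : List Γ) vs :=
  empty_solution_general us vs hlen x hsol u a m hun hpre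
end

section
/- Let pq be a primitive word and E a one-variable word equation. Then the intersection sol(E) ∩ [(pq)^+ p] is either all of [(pq)^+ p] or contains at most one element. -/
/-!
Substituting `X ↦ X p` turns the family `(pq)^i p` into `z^i` with `z = pq`, so it suffices to
show: if `U = V` holds for `X = z^i` and `X = z^j` with `i ≠ j`, then it holds for every `z^k`,
`k ≥ 1`. Induct on `|U| + |V|`. Equal leading constants cancel. If one side starts with `X`, look
at the longest common prefix of both sides with `z^ω`: on that side its length grows strictly
with `k`, while on the other side `t X ⋯` (or `t`) it does not depend on `k` unless `t` commutes
with `z`. By primitivity `t = z^a` then, and `X ⋯ = z^a X ⋯` reduces to a shorter equation.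
-/

/-- Substitute the word `x` for the variable (represented by `none`) in a word
over `Option Γ` (constants are `some a`). -/
def subst {Γ : Type*} (x : List Γ) (U : List (Option Γ)) : List Γ :=
  U.flatMap fun c => c.elim x fun a => [a]

/-- `listPow w k` is the word `w^k`. -/
def listPow {Γ : Type*} (w : List Γ) (k : ℕ) : List Γ :=
  (List.replicate k w).flatten

/-- A word is primitive if it is nonempty and not a proper power. -/
def Primitive {Γ : Type*} (p : List Γ) : Prop :=
  p ≠ [] ∧ ∀ (q : List Γ) (k : ℕ), p = listPow q k → k = 1

open List

section listPow

variable {α : Type*}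

@[simp] lemma listPow_zero (w : List α) : listPow w 0 = [] := rfl

lemma listPow_succ (w : List α) (k : ℕ) : listPow w (k + 1) = w ++ listPow w k := by
  simp [listPow, replicate_succ]

@[simp] lemma listPow_one (w : List α) : listPow w 1 = w := by
  simp [listPow_succ]

lemma listPow_add (w : List α) (a b : ℕ) : listPow w (a + b) = listPow w a ++ listPow w b := by
  rw [listPow, listPow, listPow, replicate_add, flatten_append]

@[simp] lemma length_listPow (w : List α) (k : ℕ) : (listPow w k).length = k * w.length := by
  induction k with
  | zero => simp
  | succ k ih => simp [listPow_succ, ih, Nat.succ_mul, Nat.add_comm]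

lemma listPow_append_comm (w : List α) (a b : ℕ) :
    listPow w a ++ listPow w b = listPow w b ++ listPow w a := by
  rw [← listPow_add, ← listPow_add, Nat.add_comm]

lemma exists_listPow_of_append_comm {x y : List α} (h : x ++ y = y ++ x) :
    ∃ w a b, x = listPow w a ∧ y = listPow w b := by
  induction hn : x.length + y.length using Nat.strong_induction_on generalizing x y with
  | _ n ih =>
  wlog hle : x.length ≤ y.length generalizing x y
  · obtain ⟨w, a, b, hy, hx⟩ := this h.symm (by omega) (by omega)
    exact ⟨w, b, a, hx, hy⟩
  obtain ⟨y₁, rfl⟩ : x <+: y :=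
    prefix_of_prefix_length_le (prefix_append _ _) (by rw [h]; exact prefix_append _ _) hle
  rcases eq_or_ne x [] with rfl | hx
  · exact ⟨y₁, 0, 1, rfl, by simp⟩
  have hcomm : x ++ y₁ = y₁ ++ x := by simpa using h
  obtain ⟨w, a, b, rfl, rfl⟩ := ih _ (by simp [← hn, length_pos_iff.2 hx]) hcomm rfl
  exact ⟨w, a, a + b, rfl, (listPow_add w a b).symm⟩

lemma eq_listPow_of_append_comm {z t : List α} (hz : Primitive z) (h : t ++ z = z ++ t) :
    ∃ a, t = listPow z a := by
  obtain ⟨w, a, b, rfl, rfl⟩ := exists_listPow_of_append_comm h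
  obtain rfl : b = 1 := hz.2 w b rfl
  exact ⟨a, by simp⟩

end listPow

section subst

variable {Γ : Type*}

@[simp] lemma subst_nil (x : List Γ) : subst x [] = [] := rfl

@[simp] lemma subst_cons_none (x : List Γ) (U : List (Option Γ)) :
    subst x (none :: U) = x ++ subst x U := by
  simp [subst]

@[simp] lemma subst_cons_some (x : List Γ) (a : Γ) (U : List (Option Γ)) :
    subst x (some a :: U) = a :: subst x U := by
  simp [subst]

@[simp] lemma subst_append (x : List Γ) (U V : List (Option Γ)) :
    subst x (U ++ V) = subst x U ++ subst x V := by
  simp [subst]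

@[simp] lemma subst_map_some (x t : List Γ) : subst x (t.map some) = t := by
  induction t with
  | nil => rfl
  | cons a t ih => simp [ih]

lemma exists_eq_map_some_or_var :
    ∀ V : List (Option Γ), (∃ t : List Γ, V = t.map some) ∨
      ∃ (t : List Γ) (V₁ : List (Option Γ)), V = t.map some ++ none :: V₁
  | [] => .inl ⟨[], rfl⟩
  | none :: V₁ => .inr ⟨[], V₁, rfl⟩
  | some a :: V => by
    rcases exists_eq_map_some_or_var V with ⟨t, rfl⟩ | ⟨t, V₁, rfl⟩
    · exact .inl ⟨a :: t, rfl⟩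
    · exact .inr ⟨a :: t, V₁, rfl⟩

lemma subst_cons_none_eq_iff {x c : List Γ} (h : x ++ c = c ++ x) (U V : List (Option Γ)) :
    subst x (none :: U) = subst x (c.map some ++ none :: V) ↔
      subst x U = subst x (c.map some ++ V) := by
  simp only [subst_cons_none, subst_append, subst_map_some]
  rw [← append_assoc, ← h, append_assoc, append_cancel_left_eq]

def replaceVar (W U : List (Option Γ)) : List (Option Γ) :=
  U.flatMap fun c => c.elim W fun a => [some a]

lemma subst_replaceVar (x : List Γ) (W U : List (Option Γ)) :
    subst x (replaceVar W U) = subst (subst x W) U := by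
  simp only [subst, replaceVar, flatMap_assoc]
  congr 1
  funext c
  cases c <;> simp

lemma subst_append_eq_subst_replaceVar (x p : List Γ) (U : List (Option Γ)) :
    subst (x ++ p) U = subst x (replaceVar (none :: p.map some) U) := by
  rw [subst_replaceVar, subst_cons_none, subst_map_some]

end subst

section powPrefixLen

variable {α : Type*} [DecidableEq α]

/-- The length of the longest common prefix of `X` and the infinite word `z z z ⋯`. -/
def powPrefixLen : List α → List α → ℕ
  | _, [] => 0
  | z, c :: X => if z.head? = some c then powPrefixLen (z.rotate 1) X + 1 else 0

lemma powPrefixLen_cons (z : List α) (c : α) (X : List α) :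
    powPrefixLen z (c :: X) = if z.head? = some c then powPrefixLen (z.rotate 1) X + 1 else 0 :=
  rfl

lemma powPrefixLen_le_length (z X : List α) : powPrefixLen z X ≤ X.length := by
  induction X generalizing z with
  | nil => exact le_rfl
  | cons c X ih =>
    rw [powPrefixLen_cons]
    split_ifs
    · simpa using ih _
    · exact Nat.zero_le _

lemma powPrefixLen_append_of_lt {z X : List α} (h : powPrefixLen z X < X.length) (Y : List α) :
    powPrefixLen z (X ++ Y) = powPrefixLen z X := by
  induction X generalizing z with
  | nil => simp at h
  | cons c X ih =>
    rw [powPrefixLen_cons] at h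
    rw [cons_append, powPrefixLen_cons, powPrefixLen_cons]
    split_ifs at h ⊢
    · rw [ih (by simpa using h)]
    · rfl

lemma powPrefixLen_append_of_eq {z X : List α} (h : powPrefixLen z X = X.length) (Y : List α) :
    powPrefixLen z (X ++ Y) = X.length + powPrefixLen (z.rotate X.length) Y := by
  induction X generalizing z with
  | nil => simp
  | cons c X ih =>
    rw [powPrefixLen_cons] at h
    split_ifs at h with hc
    rw [cons_append, powPrefixLen_cons, if_pos hc, ih (by simpa using h), rotate_rotate,
      length_cons, Nat.add_comm 1]
    omega

lemma append_rotate_eq_of_powPrefixLen_eq {z X : List α} (h : powPrefixLen z X = X.length) :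
    X ++ z.rotate X.length = z ++ X := by
  induction X generalizing z with
  | nil => simp
  | cons c X ih =>
    rw [powPrefixLen_cons] at h
    split_ifs at h with hc
    obtain ⟨z, rfl⟩ : ∃ z', z = c :: z' := by
      cases z <;> simp_all
    have := ih (z := z ++ [c]) (by simpa using h)
    simp only [length_cons, ← rotate_rotate]
    simpa using this

lemma powPrefixLen_of_prefix {z X : List α} (h : X <+: z) : powPrefixLen z X = X.length := by
  induction X generalizing z with
  | nil => rfl
  | cons c X ih =>
    obtain ⟨z, rfl⟩ : ∃ z', z = c :: z' := by
      obtain ⟨t, rfl⟩ := h; exact ⟨X ++ t, rfl⟩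
    rw [powPrefixLen_cons, head?_cons, if_pos rfl, rotate_cons_succ, rotate_zero,
      ih ((cons_prefix_cons.1 h).2.trans (prefix_append _ _)), length_cons]

lemma powPrefixLen_lt_of_ne {r z : List α} (hlen : r.length = z.length) (hne : r ≠ z) :
    powPrefixLen r z < z.length := by
  refine (powPrefixLen_le_length r z).lt_of_ne fun h => hne ?_
  have hcomm := append_rotate_eq_of_powPrefixLen_eq h
  rw [← hlen, rotate_length] at hcomm
  exact ((append_inj hcomm hlen.symm).1).symm

lemma powPrefixLen_listPow_append (z : List α) (k : ℕ) (Y : List α) :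
    powPrefixLen z (listPow z k ++ Y) = k * z.length + powPrefixLen z Y := by
  induction k with
  | zero => simp
  | succ k ih =>
    rw [listPow_succ, append_assoc, powPrefixLen_append_of_eq (powPrefixLen_of_prefix prefix_rfl),
      rotate_length, ih]
    ring

lemma powPrefixLen_listPow_append_of_ne {r z : List α} (hlen : r.length = z.length) (hne : r ≠ z)
    {k : ℕ} (hk : 1 ≤ k) (Y : List α) :
    powPrefixLen r (listPow z k ++ Y) = powPrefixLen r z := by
  obtain ⟨k, rfl⟩ := Nat.exists_eq_add_of_le' hk
  rw [listPow_succ, append_assoc, powPrefixLen_append_of_lt (powPrefixLen_lt_of_ne hlen hne)]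

lemma append_comm_or_powPrefixLen_append_listPow_append (t z : List α) :
    t ++ z = z ++ t ∨ ∀ k, 1 ≤ k → ∀ Y,
      powPrefixLen z (t ++ (listPow z k ++ Y)) = powPrefixLen z (t ++ z) := by
  rcases (powPrefixLen_le_length z t).lt_or_eq with hlt | heq
  · exact .inr fun k _ Y => by
      rw [powPrefixLen_append_of_lt hlt, powPrefixLen_append_of_lt hlt]
  by_cases hrot : z.rotate t.length = z
  · have h := append_rotate_eq_of_powPrefixLen_eq heq
    rw [hrot] at h
    exact .inl h
  · refine .inr fun k hk Y => ?_
    rw [powPrefixLen_append_of_eq heq, powPrefixLen_append_of_eq heq,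
      powPrefixLen_listPow_append_of_ne (length_rotate _ _) hrot hk]

end powPrefixLen

section twoSolutions

variable {Γ : Type*} {z : List Γ}

lemma powPrefixLen_subst_listPow_mono [DecidableEq Γ] (W : List (Option Γ)) {r : List Γ}
    (hr : r.length = z.length) {k k' : ℕ} (hk : 1 ≤ k) (hkk' : k ≤ k') :
    powPrefixLen r (subst (listPow z k) W) ≤ powPrefixLen r (subst (listPow z k') W) := by
  induction W generalizing r with
  | nil => exact le_rfl
  | cons c W ih =>
    cases c with
    | some a =>
      simp only [subst_cons_some, powPrefixLen_cons]
      split_ifs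
      · exact Nat.succ_le_succ (ih (by simpa using hr))
      · exact le_rfl
    | none =>
      simp only [subst_cons_none]
      by_cases hrz : r = z
      · subst hrz
        simp only [powPrefixLen_listPow_append]
        gcongr
        exact ih rfl
      · rw [powPrefixLen_listPow_append_of_ne hr hrz hk,
          powPrefixLen_listPow_append_of_ne hr hrz (hk.trans hkk')]

lemma powPrefixLen_subst_listPow_cons_none_injOn [DecidableEq Γ] (hz : z ≠ [])
    (U : List (Option Γ)) :
    Set.InjOn (fun k => powPrefixLen z (subst (listPow z k) (none :: U))) (Set.Ici 1) := by
  refine StrictMonoOn.injOn fun k hk k' _ hkk' => ?_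
  simp only [subst_cons_none, powPrefixLen_listPow_append]
  have := powPrefixLen_subst_listPow_mono U (r := z) rfl hk hkk'.le
  have := Nat.mul_lt_mul_of_pos_right hkk' (length_pos_iff.2 hz)
  omega

lemma exists_eq_listPow_var_of_subst_cons_none (hz : Primitive z) {i j : ℕ} (hi : 1 ≤ i)
    (hj : 1 ≤ j) (hij : i ≠ j) {U V : List (Option Γ)}
    (hEi : subst (listPow z i) (none :: U) = subst (listPow z i) V)
    (hEj : subst (listPow z j) (none :: U) = subst (listPow z j) V) :
    ∃ a V₁, V = (listPow z a).map some ++ none :: V₁ := by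
  classical
  have hne : powPrefixLen z (subst (listPow z i) V) ≠ powPrefixLen z (subst (listPow z j) V) := by
    rw [← hEi, ← hEj]
    exact fun h => hij (powPrefixLen_subst_listPow_cons_none_injOn hz.1 U hi hj h)
  rcases exists_eq_map_some_or_var V with ⟨t, rfl⟩ | ⟨t, V₁, rfl⟩
  · simp at hne
  rcases append_comm_or_powPrefixLen_append_listPow_append t z with hcomm | hconst
  · obtain ⟨a, rfl⟩ := eq_listPow_of_append_comm hz hcomm
    exact ⟨a, V₁, rfl⟩
  · simp only [subst_append, subst_map_some, subst_cons_none, hconst i hi, hconst j hj] at hne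
    exact (hne rfl).elim

theorem subst_listPow_eq_of_two_solutions (hz : Primitive z) {i j : ℕ} (hi : 1 ≤ i) (hj : 1 ≤ j)
    (hij : i ≠ j) {k : ℕ} (hk : 1 ≤ k) :
    ∀ U V : List (Option Γ), subst (listPow z i) U = subst (listPow z i) V →
      subst (listPow z j) U = subst (listPow z j) V →
      subst (listPow z k) U = subst (listPow z k) V
  | [], [], _, _ => rfl
  | some a :: U, some b :: V, hEi, hEj => by
    simp only [subst_cons_some, cons.injEq] at hEi hEj ⊢
    exact ⟨hEi.1, subst_listPow_eq_of_two_solutions hz hi hj hij hk U V hEi.2 hEj.2⟩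
  | none :: U, V, hEi, hEj => by
    obtain ⟨a, V₁, rfl⟩ := exists_eq_listPow_var_of_subst_cons_none hz hi hj hij hEi hEj
    simp only [subst_cons_none_eq_iff (listPow_append_comm z _ a)] at hEi hEj ⊢
    exact subst_listPow_eq_of_two_solutions hz hi hj hij hk U _ hEi hEj
  | U, none :: V, hEi, hEj => by
    obtain ⟨a, U₁, rfl⟩ := exists_eq_listPow_var_of_subst_cons_none hz hi hj hij hEi.symm hEj.symm
    rw [eq_comm, subst_cons_none_eq_iff (listPow_append_comm z _ a)] at hEi hEj ⊢
    exact subst_listPow_eq_of_two_solutions hz hi hj hij hk V _ hEi hEj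
  | [], some b :: V, hEi, _ | some a :: U, [], hEi, _ => by simp at hEi
termination_by U V => U.length + V.length
decreasing_by all_goals (subst_vars; simp; omega)

end twoSolutions

/-- for a one-variable equation E and a primitive word pq, the
set sol(E) ∩ [(pq)⁺p] is either all of [(pq)⁺p] or has at most one element. -/
theorem sol_inter_pqp {Γ : Type*} (U V : List (Option Γ)) (p q : List Γ)
    (hprim : Primitive (p ++ q)) :
    (∀ i : ℕ, 1 ≤ i → subst (listPow (p ++ q) i ++ p) U = subst (listPow (p ++ q) i ++ p) V) ∨
    (∀ i j : ℕ, 1 ≤ i → 1 ≤ j →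
      subst (listPow (p ++ q) i ++ p) U = subst (listPow (p ++ q) i ++ p) V →
      subst (listPow (p ++ q) j ++ p) U = subst (listPow (p ++ q) j ++ p) V →
      i = j) := by
  simp only [subst_append_eq_subst_replaceVar _ p]
  refine or_iff_not_imp_right.2 fun h k hk => ?_
  push Not at h
  obtain ⟨i, j, hi, hj, hEi, hEj, hij⟩ := h
  exact subst_listPow_eq_of_two_solutions hprim hi hj hij hk _ _ hEi hEj
end
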